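/- arXiv:1109.3606 — 7 statements merged into one kernel-verified Lean document; each statement's English description precedes it below -/
import Mathlib

section
/- The covering game is an exact potential game with potential function Φ(s) = c(ON(s)) + w(F^u(s)); that is, for every agent i, every strategy profile s_{-i} of the other agents, and any two actions a, a' of agent i, cost_i(a', s_{-i}) − cost_i(a, s_{-i}) = Φ(a', s_{-i}) − Φ(a, s_{-i}). -/
open Finset

def uncov {n : ℕ} (F : Finset (Finset (Fin n))) (s : Fin n → Bool) :
    Finset (Finset (Fin n)) :=
  F.filter (fun σ => ∀ i ∈ σ, s i = false)

def agentCost {n : ℕ} (F : Finset (Finset (Fin n))) (c : Fin n → ℝ)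
    (w : Finset (Fin n) → ℝ) (s : Fin n → Bool) (i : Fin n) : ℝ :=
  if s i then c i else ∑ σ ∈ (uncov F s).filter (fun σ => i ∈ σ), w σ

/-- The potential function `Φ(s) = c(ON(s)) + w(F^u(s))`. -/
def Phi {n : ℕ} (F : Finset (Finset (Fin n))) (c : Fin n → ℝ)
    (w : Finset (Fin n) → ℝ) (s : Fin n → Bool) : ℝ :=
  (∑ i ∈ Finset.univ.filter (fun i => s i = true), c i) + ∑ σ ∈ uncov F s, w σ

/-- the covering game is an exact potential game with potential `Φ`. -/
theorem covering_exact_potential {n : ℕ} (F : Finset (Finset (Fin n)))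
    (c : Fin n → ℝ) (w : Finset (Fin n) → ℝ)
    (i : Fin n) (s : Fin n → Bool) (a a' : Bool) :
    agentCost F c w (Function.update s i a') i - agentCost F c w (Function.update s i a) i
      = Phi F c w (Function.update s i a') - Phi F c w (Function.update s i a) := by
  have key : agentCost F c w (Function.update s i true) i
        - agentCost F c w (Function.update s i false) i
      = Phi F c w (Function.update s i true) - Phi F c w (Function.update s i false) := by
    have h1 : Finset.univ.filter (fun j => Function.update s i true j = true)
        = insert i (Finset.univ.filter (fun j => Function.update s i false j = true)) := by
      ext j
      rcases eq_or_ne j i with h | h <;> simp [Function.update, h]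
    have hi : i ∉ Finset.univ.filter (fun j => Function.update s i false j = true) := by
      simp [Function.update]
    have h2 : uncov F (Function.update s i true)
        = (uncov F (Function.update s i false)).filter (fun σ => ¬ i ∈ σ) := by
      ext σ
      simp only [uncov, Finset.mem_filter]
      constructor
      · rintro ⟨hF, h⟩
        have hiσ : i ∉ σ := fun hmem => by simpa using h i hmem
        refine ⟨⟨hF, fun j hj => ?_⟩, hiσ⟩
        have hne : j ≠ i := fun e => hiσ (e ▸ hj)
        have := h j hj
        simpa [Function.update, hne] using this
      · rintro ⟨⟨hF, h⟩, hiσ⟩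
        refine ⟨hF, fun j hj => ?_⟩
        have hne : j ≠ i := fun e => hiσ (e ▸ hj)
        have := h j hj
        simpa [Function.update, hne] using this
    simp only [agentCost, Phi, Function.update_self, if_true, Bool.false_eq_true, if_false,
      h1, h2, Finset.sum_insert hi]
    rw [← Finset.sum_filter_add_sum_filter_not (uncov F (Function.update s i false))
      (fun σ => i ∈ σ) w]
    ring
  cases a <;> cases a' <;> linarith [key]
end

section
/- For every joint strategy s in the covering game, Φ(s) ≤ cost(s) ≤ F_max · Φ(s), where Φ(s) = c(ON(s)) + w(F^u(s)), cost(s) is the social cost, and F_max = max_{σ∈F} |σ|. -/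
open Finset

/-- Social cost `c(ON(s)) + ∑_{σ uncovered} |σ|·w σ`. -/
def socialCost {n : ℕ} (F : Finset (Finset (Fin n))) (c : Fin n → ℝ)
    (w : Finset (Fin n) → ℝ) (s : Fin n → Bool) : ℝ :=
  (∑ i ∈ Finset.univ.filter (fun i => s i = true), c i)
    + ∑ σ ∈ uncov F s, (σ.card : ℝ) * w σ

/-- `Φ(s) ≤ cost(s) ≤ F_max · Φ(s)`. -/
theorem phi_le_cost_le_FmaxPhi {n : ℕ} (F : Finset (Finset (Fin n)))
    (c : Fin n → ℝ) (w : Finset (Fin n) → ℝ) (Fmax : ℕ)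
    (hFne : F.Nonempty) (hne : ∀ σ ∈ F, σ.Nonempty)
    (hc : ∀ i, 0 < c i) (hw : ∀ σ ∈ F, 0 < w σ)
    (hFmax : Fmax = F.sup Finset.card)
    (s : Fin n → Bool) :
    Phi F c w s ≤ socialCost F c w s ∧
      socialCost F c w s ≤ (Fmax : ℝ) * Phi F c w s := by
  have huncov : ∀ σ ∈ uncov F s, σ ∈ F := fun σ hσ => (Finset.mem_filter.mp hσ).1
  have hFmax1 : 1 ≤ Fmax := by
    obtain ⟨σ, hσ⟩ := hFne
    have := (hne σ hσ).card_pos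
    calc 1 ≤ σ.card := this
    _ ≤ F.sup Finset.card := Finset.le_sup hσ
    _ = Fmax := hFmax.symm
  have hcsum : 0 ≤ ∑ i ∈ Finset.univ.filter (fun i => s i = true), c i :=
    Finset.sum_nonneg fun i _ => (hc i).le
  constructor
  · unfold Phi socialCost
    gcongr with σ hσ
    have hw' := hw σ (huncov σ hσ)
    have hcard : (1 : ℝ) ≤ σ.card := by
      exact_mod_cast (hne σ (huncov σ hσ)).card_pos
    nlinarith
  · unfold Phi socialCost
    rw [mul_add]
    gcongr
    · nlinarith [hcsum, (show (1:ℝ) ≤ Fmax by exact_mod_cast hFmax1)]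
    · rw [Finset.mul_sum]
      apply Finset.sum_le_sum
      intro σ hσ
      have hw' := (hw σ (huncov σ hσ)).le
      have hcard : (σ.card : ℝ) ≤ Fmax := by
        exact_mod_cast hFmax ▸ Finset.le_sup (huncov σ hσ)
      exact mul_le_mul_of_nonneg_right hcard hw'
end

section
/- There is a family of covering game instances where the Price of Anarchy is Ω(n): specifically, for a star graph with n vertices (center v, leaves u_1,...,u_{n-1}), sets {v,u_j} for each j, all vertex costs equal to c with 0 < c < 1, and all set weights 1, the state with only the center on is a Nash equilibrium with social cost c, and the state with only the center off is a Nash equilibrium with social cost c(n−1). -/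
open Finset

/-- Nash equilibrium: no agent can strictly decrease its cost by switching. -/
def isNE {n : ℕ} (F : Finset (Finset (Fin n))) (c : Fin n → ℝ)
    (w : Finset (Fin n) → ℝ) (s : Fin n → Bool) : Prop :=
  ∀ i a, agentCost F c w s i ≤ agentCost F c w (Function.update s i a) i

lemma cost_nonneg {n : ℕ} (F : Finset (Finset (Fin n))) (c : Fin n → ℝ) (c0 : ℝ)
    (hc : ∀ i, c i = c0) (hc0 : 0 ≤ c0)
    (w : Finset (Fin n) → ℝ) (hw : ∀ σ, w σ = 1) (s : Fin n → Bool) (i : Fin n) :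
    0 ≤ agentCost F c w s i := by
  unfold agentCost
  split
  · rw [hc]; exact hc0
  · exact Finset.sum_nonneg fun σ _ => by rw [hw]; norm_num

/-- the star-graph covering game has PoA `Ω(n)`: with all costs `c0 ∈ (0,1)`
and all weights `1`, "only the center on" is a NE of cost `c0` and "only the center off"
is a NE of cost `c0·(n−1)`. -/
theorem star_poa {n : ℕ} (hn : 2 ≤ n)
    (center : Fin n) (hcenter : center = ⟨0, by omega⟩)
    (F : Finset (Finset (Fin n)))
    (hF : F = (Finset.univ.filter (fun j => j ≠ center)).image
        (fun j => ({center, j} : Finset (Fin n))))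
    (c : Fin n → ℝ) (c0 : ℝ) (hc : ∀ i, c i = c0) (hc0 : 0 < c0) (hc1 : c0 < 1)
    (w : Finset (Fin n) → ℝ) (hw : ∀ σ, w σ = 1)
    (s1 s2 : Fin n → Bool)
    (hs1 : ∀ i, s1 i = true ↔ i = center)
    (hs2 : ∀ i, s2 i = true ↔ i ≠ center) :
    isNE F c w s1 ∧ (∑ i, agentCost F c w s1 i) = c0 ∧
      isNE F c w s2 ∧ (∑ i, agentCost F c w s2 i) = c0 * (n - 1) := by
  have hFm : ∀ σ, σ ∈ F ↔ ∃ j, j ≠ center ∧ σ = ({center, j} : Finset (Fin n)) := by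
    intro σ
    subst hF
    simp only [Finset.mem_image, Finset.mem_filter, Finset.mem_univ, true_and]
    constructor
    · rintro ⟨j, hj, rfl⟩; exact ⟨j, hj, rfl⟩
    · rintro ⟨j, hj, rfl⟩; exact ⟨j, hj, rfl⟩
  have hs1c : s1 center = true := (hs1 center).mpr rfl
  have hs1f : ∀ j, j ≠ center → s1 j = false := by
    intro j hj
    cases h : s1 j with
    | false => rfl
    | true => exact absurd ((hs1 j).mp h) hj
  have hs2c : s2 center = false := by
    cases h : s2 center with
    | false => rfl
    | true => exact absurd ((hs2 center).mp h) (by simp)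
  have hs2t : ∀ j, j ≠ center → s2 j = true := fun j hj => (hs2 j).mpr hj
  -- uncov F s1 = ∅
  have hu1 : uncov F s1 = ∅ := by
    apply Finset.filter_false_of_mem
    intro σ hσ h
    obtain ⟨j, hj, rfl⟩ := (hFm σ).mp hσ
    have := h center (by simp)
    rw [hs1c] at this; exact absurd this (by simp)
  have hu2 : uncov F s2 = ∅ := by
    apply Finset.filter_false_of_mem
    intro σ hσ h
    obtain ⟨j, hj, rfl⟩ := (hFm σ).mp hσ
    have := h j (by simp)
    rw [hs2t j hj] at this; exact absurd this (by simp)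
  -- a fixed non-center leaf
  have hne1 : (⟨1, by omega⟩ : Fin n) ≠ center := by
    rw [hcenter]; intro h
    simpa using congrArg Fin.val h
  refine ⟨?_, ?_, ?_, ?_⟩
  · -- isNE s1
    intro i a
    by_cases hi : i = center
    · subst hi
      cases a with
      | true =>
        have : Function.update s1 i true = s1 := by
          funext x; rcases eq_or_ne x i with rfl | h
          · simp [hs1c]
          · simp [Function.update_of_ne h]
        rw [this]
      | false =>
        have hcost : agentCost F c w s1 i = c0 := by
          unfold agentCost; rw [hs1c]; simp [hc]
        rw [hcost]
        unfold agentCost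
        rw [Function.update_self]
        simp only [if_neg (by simp : ¬ (false = true))]
        set T := ((uncov F (Function.update s1 i false)).filter
          (fun σ => i ∈ σ)) with hT
        have hmem : ({i, ⟨1, by omega⟩} : Finset (Fin n)) ∈ T := by
          rw [hT]
          simp only [Finset.mem_filter]
          constructor
          · unfold uncov
            simp only [Finset.mem_filter]
            refine ⟨(hFm _).mpr ⟨⟨1, by omega⟩, hne1, rfl⟩, ?_⟩
            intro x hx
            simp only [Finset.mem_insert, Finset.mem_singleton] at hx
            rcases hx with rfl | rfl
            · simp
            · rw [Function.update_of_ne hne1]; exact hs1f _ hne1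
          · simp
        calc c0 ≤ 1 := le_of_lt hc1
          _ = w ({i, ⟨1, by omega⟩} : Finset (Fin n)) := (hw _).symm
          _ ≤ ∑ σ ∈ T, w σ := Finset.single_le_sum
              (fun σ _ => by rw [hw]; norm_num) hmem
    · have : agentCost F c w s1 i = 0 := by
        unfold agentCost
        rw [hs1f i hi]
        simp [hu1]
      rw [this]
      exact cost_nonneg F c c0 hc (le_of_lt hc0) w hw _ i
  · -- social cost s1
    rw [Finset.sum_eq_single center]
    · unfold agentCost; rw [hs1c]; simp [hc]
    · intro j _ hj
      unfold agentCost; rw [hs1f j hj]; simp [hu1]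
    · simp
  · -- isNE s2
    intro i a
    by_cases hi : i = center
    · subst hi
      have : agentCost F c w s2 i = 0 := by
        unfold agentCost; rw [hs2c]; simp [hu2]
      rw [this]
      exact cost_nonneg F c c0 hc (le_of_lt hc0) w hw _ _
    · cases a with
      | true =>
        have : Function.update s2 i true = s2 := by
          funext x; rcases eq_or_ne x i with rfl | h
          · simp [hs2t x hi]
          · simp [Function.update_of_ne h]
        rw [this]
      | false =>
        have hcost : agentCost F c w s2 i = c0 := by
          unfold agentCost; rw [hs2t i hi]; simp [hc]
        rw [hcost]
        unfold agentCost
        rw [Function.update_self]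
        simp only [if_neg (by simp : ¬ (false = true))]
        set T := ((uncov F (Function.update s2 i false)).filter
          (fun σ => i ∈ σ)) with hT
        have hmem : ({center, i} : Finset (Fin n)) ∈ T := by
          rw [hT]
          simp only [Finset.mem_filter]
          constructor
          · unfold uncov
            simp only [Finset.mem_filter]
            refine ⟨(hFm _).mpr ⟨i, hi, rfl⟩, ?_⟩
            intro x hx
            simp only [Finset.mem_insert, Finset.mem_singleton] at hx
            rcases hx with rfl | rfl
            · rw [Function.update_of_ne (fun h => hi h.symm)]; exact hs2c
            · simp
          · simp
        calc c0 ≤ 1 := le_of_lt hc1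
          _ = w ({center, i} : Finset (Fin n)) := (hw _).symm
          _ ≤ ∑ σ ∈ T, w σ := Finset.single_le_sum
              (fun σ _ => by rw [hw]; norm_num) hmem
  · -- social cost s2
    have hval : ∀ j, agentCost F c w s2 j = if j = center then 0 else c0 := by
      intro j
      rcases eq_or_ne j center with rfl | h
      · unfold agentCost; rw [hs2c]; simp [hu2]
      · unfold agentCost; rw [hs2t j h]; simp [hc, h]
    rw [Finset.sum_congr rfl (fun j _ => hval j), Finset.sum_ite]
    simp only [Finset.sum_const_zero, zero_add, Finset.sum_const, nsmul_eq_mul]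
    have hcard : (Finset.univ.filter (fun j : Fin n => ¬ j = center)).card = n - 1 := by
      have : (Finset.univ.filter (fun j : Fin n => ¬ j = center)) =
          Finset.univ.erase center := by
        ext x; simp [Finset.mem_erase, and_comm]
      rw [this, Finset.card_erase_of_mem (Finset.mem_univ _), Finset.card_univ,
        Fintype.card_fin]
    rw [hcard]
    have h1 : (1:ℕ) ≤ n := by omega
    push_cast [Nat.cast_sub h1]
    ring
end

section
/- In the covering game, let L be the set of agents that are on under the advertising strategy and suppose s' is any strategy in which every agent in L_off (agents of L that are off in s') is best responding. Then the total weight of sets that are covered under the advertising strategy but uncovered under s' is at most c(L). -/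
open Finset

/-- if every agent of `L = ON(s^{ad})` that is off in `s'` is best responding,
then the total weight of sets covered by `s^{ad}` but uncovered in `s'` is at most `c(L)`. -/
theorem bad_sets_weight_le {n : ℕ} (F : Finset (Finset (Fin n)))
    (c : Fin n → ℝ) (w : Finset (Fin n) → ℝ)
    (hc : ∀ i, 0 ≤ c i) (hw : ∀ σ ∈ F, 0 ≤ w σ)
    (sad s' : Fin n → Bool)
    (hbr : ∀ ℓ, sad ℓ = true → s' ℓ = false →
      (∑ σ ∈ (uncov F s').filter (fun σ => ℓ ∈ σ), w σ) ≤ c ℓ) :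
    (∑ σ ∈ F.filter (fun σ => (∃ i ∈ σ, sad i = true) ∧ ∀ i ∈ σ, s' i = false), w σ)
      ≤ ∑ ℓ ∈ Finset.univ.filter (fun ℓ => sad ℓ = true), c ℓ := by
  set A : Finset (Fin n) :=
    Finset.univ.filter (fun ℓ => sad ℓ = true ∧ s' ℓ = false) with hA
  have hwu : ∀ σ ∈ uncov F s', 0 ≤ w σ := fun σ hσ => hw σ (mem_filter.mp hσ).1
  calc
    (∑ σ ∈ F.filter (fun σ => (∃ i ∈ σ, sad i = true) ∧ ∀ i ∈ σ, s' i = false), w σ)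
        ≤ ∑ σ ∈ F.filter (fun σ => (∃ i ∈ σ, sad i = true) ∧ ∀ i ∈ σ, s' i = false),
            ∑ ℓ ∈ A, (if ℓ ∈ σ then w σ else 0) := by
          refine Finset.sum_le_sum fun σ hσ => ?_
          obtain ⟨hσF, ⟨i, hiσ, hi⟩, hoff⟩ := by
            simpa [Finset.mem_filter] using hσ
          have hiA : i ∈ A := by simp [hA, hi, hoff i hiσ]
          have := Finset.single_le_sum (f := fun ℓ => if ℓ ∈ σ then w σ else 0)
            (fun ℓ _ => by by_cases h : ℓ ∈ σ <;> simp [h, hw σ hσF]) hiA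
          simpa [hiσ] using this
    _ ≤ ∑ σ ∈ uncov F s', ∑ ℓ ∈ A, (if ℓ ∈ σ then w σ else 0) := by
          refine Finset.sum_le_sum_of_subset_of_nonneg ?_ (fun σ hσ _ => ?_)
          · intro σ hσ
            obtain ⟨hσF, _, hoff⟩ := by simpa [Finset.mem_filter] using hσ
            simp [uncov, Finset.mem_filter, hσF]; exact hoff
          · exact Finset.sum_nonneg fun ℓ _ => by by_cases h : ℓ ∈ σ <;> simp [h, hwu σ hσ]
    _ = ∑ ℓ ∈ A, ∑ σ ∈ (uncov F s').filter (fun σ => ℓ ∈ σ), w σ := by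
          rw [Finset.sum_comm]
          exact Finset.sum_congr rfl fun ℓ _ => (Finset.sum_filter _ _).symm
    _ ≤ ∑ ℓ ∈ A, c ℓ := by
          refine Finset.sum_le_sum fun ℓ hℓ => ?_
          obtain ⟨h1, h2⟩ := by simpa [hA] using hℓ
          exact hbr ℓ h1 h2
    _ ≤ ∑ ℓ ∈ Finset.univ.filter (fun ℓ => sad ℓ = true), c ℓ := by
          refine Finset.sum_le_sum_of_subset_of_nonneg ?_ (fun ℓ _ _ => hc ℓ)
          intro ℓ hℓ
          simp only [hA, Finset.mem_filter] at hℓ ⊢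
          exact ⟨hℓ.1, hℓ.2.1⟩
end

section
/- For any constant a ∈ (0,1) and reals 0 < c ≤ d, the sum Σ_{i=0}^{⌊c⌋} d·C(d,i)·(1−a)^{d−i}·a^i is O(⌈c⌉); more precisely, there is a constant K depending only on a such that for all natural numbers d and all natural m ≤ d, Σ_{i=0}^{m} d·C(d,i)·(1−a)^{d−i}·a^i ≤ K·(m+1). -/
/-!
The identity `(d + 1) · C(d, i) · a = (i + 1) · C(d + 1, i + 1)` turns each summand, up to the
factor `(i + 1) / a ≤ (m + 1) / a`, into the Bernstein term `C(d+1, i+1) a^(i+1) (1-a)^(d-i)`,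
i.e. a probability of `Binomial(d + 1, a)`. These sum to at most `1`, so `K = 1 / a` works.
-/

open Finset Polynomial

namespace bernsteinPolynomial

theorem add_one_mul_X_mul (R : Type*) [CommRing R] (n ν : ℕ) :
    (n + 1 : R[X]) * X * bernsteinPolynomial R n ν =
      (ν + 1 : R[X]) * bernsteinPolynomial R (n + 1) (ν + 1) := by
  have hchoose := congrArg (Nat.cast (R := R[X])) (Nat.add_one_mul_choose_eq n ν)
  push_cast at hchoose
  rw [bernsteinPolynomial, bernsteinPolynomial, Nat.add_sub_add_right]
  linear_combination X ^ (ν + 1) * (1 - X) ^ (n - ν) * hchoose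

theorem eval_nonneg {a : ℝ} (ha0 : 0 ≤ a) (ha1 : a ≤ 1) (n ν : ℕ) :
    0 ≤ (bernsteinPolynomial ℝ n ν).eval a := by
  simp only [bernsteinPolynomial, eval_mul, eval_pow, eval_sub, eval_one, eval_X, eval_natCast]
  have : 0 ≤ 1 - a := sub_nonneg.mpr ha1
  positivity

theorem sum_range_eval_le_one {a : ℝ} (ha0 : 0 ≤ a) (ha1 : a ≤ 1) {n k : ℕ} (hk : k ≤ n + 1) :
    ∑ ν ∈ range k, (bernsteinPolynomial ℝ n ν).eval a ≤ 1 := by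
  calc ∑ ν ∈ range k, (bernsteinPolynomial ℝ n ν).eval a
      ≤ ∑ ν ∈ range (n + 1), (bernsteinPolynomial ℝ n ν).eval a :=
        sum_le_sum_of_subset_of_nonneg (range_subset_range.mpr hk)
          fun ν _ _ => eval_nonneg ha0 ha1 n ν
    _ = 1 := by rw [← eval_finsetSum, bernsteinPolynomial.sum, eval_one]

end bernsteinPolynomial

theorem binomial_term_le_eval_bernsteinPolynomial {a : ℝ} (ha0 : 0 < a) (ha1 : a ≤ 1)
    {d i m : ℕ} (hi : i ≤ m) :
    (d : ℝ) * (d.choose i : ℝ) * (1 - a) ^ (d - i) * a ^ i ≤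
      (m + 1) / a * (bernsteinPolynomial ℝ (d + 1) (i + 1)).eval a := by
  have hshift := congrArg (eval a) (bernsteinPolynomial.add_one_mul_X_mul ℝ d i)
  have hterm : (bernsteinPolynomial ℝ d i).eval a = d.choose i * a ^ i * (1 - a) ^ (d - i) := by
    simp [bernsteinPolynomial]
  simp only [eval_mul, eval_add, eval_one, eval_X, eval_natCast, hterm] at hshift
  have hT := bernsteinPolynomial.eval_nonneg ha0.le ha1 d i
  rw [hterm] at hT
  have hB := bernsteinPolynomial.eval_nonneg ha0.le ha1 (d + 1) (i + 1)
  have him : (i : ℝ) + 1 ≤ m + 1 := by exact_mod_cast Nat.succ_le_succ hi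
  rw [div_mul_eq_mul_div, le_div_iff₀ ha0]
  calc (d : ℝ) * d.choose i * (1 - a) ^ (d - i) * a ^ i * a
      ≤ (d + 1) * a * (d.choose i * a ^ i * (1 - a) ^ (d - i)) := by nlinarith
    _ = (i + 1) * (bernsteinPolynomial ℝ (d + 1) (i + 1)).eval a := hshift
    _ ≤ (m + 1) * (bernsteinPolynomial ℝ (d + 1) (i + 1)).eval a :=
        mul_le_mul_of_nonneg_right him hB

/-- Proposition `tech`: for constant `a ∈ (0,1)` there is a constant `K`
such that for all `d` and `m ≤ d`,
`∑_{i=0}^{m} d·C(d,i)·(1−a)^{d−i}·a^i ≤ K·(m+1)`. -/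
theorem binomial_tail_times_d {a : ℝ} (ha0 : 0 < a) (ha1 : a < 1) :
    ∃ K : ℝ, ∀ d m : ℕ, m ≤ d →
      (∑ i ∈ Finset.range (m + 1),
          (d : ℝ) * (d.choose i : ℝ) * (1 - a) ^ (d - i) * a ^ i)
        ≤ K * (m + 1) := by
  refine ⟨1 / a, fun d m hm => ?_⟩
  have hB : ∑ i ∈ range (m + 1), (bernsteinPolynomial ℝ (d + 1) (i + 1)).eval a ≤ 1 := by
    calc ∑ i ∈ range (m + 1), (bernsteinPolynomial ℝ (d + 1) (i + 1)).eval a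
        ≤ ∑ ν ∈ range (m + 2), (bernsteinPolynomial ℝ (d + 1) ν).eval a := by
          rw [sum_range_succ' _ (m + 1)]
          exact le_add_of_nonneg_right (bernsteinPolynomial.eval_nonneg ha0.le ha1.le _ _)
      _ ≤ 1 := bernsteinPolynomial.sum_range_eval_le_one ha0.le ha1.le (by omega)
  calc (∑ i ∈ range (m + 1), (d : ℝ) * (d.choose i : ℝ) * (1 - a) ^ (d - i) * a ^ i)
      ≤ ∑ i ∈ range (m + 1), (m + 1) / a * (bernsteinPolynomial ℝ (d + 1) (i + 1)).eval a :=
        sum_le_sum fun i hi =>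
          binomial_term_le_eval_bernsteinPolynomial ha0 ha1.le (Nat.lt_succ_iff.mp (mem_range.mp hi))
    _ = (m + 1) / a * ∑ i ∈ range (m + 1), (bernsteinPolynomial ℝ (d + 1) (i + 1)).eval a := by
        rw [mul_sum]
    _ ≤ (m + 1) / a := mul_le_of_le_one_right (by positivity) hB
    _ = 1 / a * (m + 1) := by ring
end

section
/- In the vertex cover game (all sets of size 2), if s' is a state where every on agent in R (agents off under the advertising strategy s^{ad}) is best responding, then each such agent r ∈ R_on is contained in some edge in which r is the unique on endpoint; consequently |R_on| ≤ |F_R| + |F_off|, where F_R is the set of edges uncovered by s^{ad} and F_off is the set of edges whose endpoint in L = ON(s^{ad}) is off in s'. -/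
open Finset

/-- Turning `r` off in `s` leaves `σ` uncovered. -/
def IsSoleOnIn {ι : Type*} (s : ι → Bool) (r : ι) (σ : Finset ι) : Prop :=
  r ∈ σ ∧ ∀ j ∈ σ, j ≠ r → s j = false

theorem Finset.exists_mem_of_pos_le_sum_filter {α M : Type*} [AddCommMonoid M] [Preorder M]
    {s : Finset α} {p : α → Prop} [DecidablePred p] {f : α → M} {c : M}
    (hc : 0 < c) (h : c ≤ ∑ x ∈ s.filter p, f x) : ∃ x ∈ s, p x := by
  by_contra! hp
  rw [filter_false_of_mem hp, sum_empty] at h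
  exact hc.not_ge h

/-- Two on agents cannot be the sole on member of the same set, so witnesses are injective. -/
theorem card_le_card_of_isSoleOnIn {ι : Type*} {s : ι → Bool} {A : Finset ι}
    {T : Finset (Finset ι)} (hon : ∀ a ∈ A, s a = true)
    (hwit : ∀ a ∈ A, ∃ σ ∈ T, IsSoleOnIn s a σ) : #A ≤ #T := by
  refine card_le_card_of_forall_subsingleton (IsSoleOnIn s) hwit fun σ _ a ha b hb => ?_
  by_contra hab
  have hb_off : s b = false := ha.2.2 b hb.2.1 (Ne.symm hab)
  simp [hon b hb.1] at hb_off

theorem IsSoleOnIn.all_off_or_exists_on_off {ι : Type*} {sad s' : ι → Bool} {r : ι}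
    {σ : Finset ι} (h : IsSoleOnIn s' r σ) (hr : sad r = false) :
    (∀ i ∈ σ, sad i = false) ∨ ∃ i ∈ σ, sad i = true ∧ s' i = false := by
  refine or_iff_not_imp_left.mpr fun hall => ?_
  simp only [not_forall, Bool.not_eq_false] at hall
  obtain ⟨i, hiσ, hi⟩ := hall
  have hir : i ≠ r := by rintro rfl; simp [hi] at hr
  exact ⟨i, hiσ, hi, h.2 i hiσ hir⟩

theorem vertex_cover_Ron_bound_general {n : ℕ} (F : Finset (Finset (Fin n)))
    (c : Fin n → ℝ) (w : Finset (Fin n) → ℝ)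
    (hc : ∀ i, 0 < c i)
    (sad s' : Fin n → Bool)
    (hbr : ∀ r, sad r = false → s' r = true →
      c r ≤ ∑ σ ∈ F.filter (fun σ => r ∈ σ ∧ ∀ j ∈ σ, j ≠ r → s' j = false), w σ) :
    (∀ r ∈ Finset.univ.filter (fun r => sad r = false ∧ s' r = true),
        ∃ σ ∈ F, r ∈ σ ∧ ∀ j ∈ σ, j ≠ r → s' j = false) ∧
      (Finset.univ.filter (fun r => sad r = false ∧ s' r = true)).card
        ≤ (F.filter (fun σ => ∀ i ∈ σ, sad i = false)).card
          + (F.filter (fun σ => ∃ i ∈ σ, sad i = true ∧ s' i = false)).card := by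
  have hwit : ∀ r ∈ univ.filter (fun r => sad r = false ∧ s' r = true),
      ∃ σ ∈ F, r ∈ σ ∧ ∀ j ∈ σ, j ≠ r → s' j = false := fun r hr =>
    have hr := (mem_filter.mp hr).2
    exists_mem_of_pos_le_sum_filter (hc r) (hbr r hr.1 hr.2)
  refine ⟨hwit, le_trans ?_ (card_union_le _ _)⟩
  refine card_le_card_of_isSoleOnIn (fun r hr => (mem_filter.mp hr).2.2) fun r hr => ?_
  obtain ⟨σ, hσF, hσ : IsSoleOnIn s' r σ⟩ := hwit r hr
  refine ⟨σ, ?_, hσ⟩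
  rw [mem_union, mem_filter, mem_filter]
  rcases hσ.all_off_or_exists_on_off (mem_filter.mp hr).2.1 with h | h
  exacts [Or.inl ⟨hσF, h⟩, Or.inr ⟨hσF, h⟩]

/-- in the vertex cover game, every best-responding on agent of
`R = OFF(s^{ad})` has an edge where it is the unique on endpoint, and hence
`|R_on| ≤ |F_R| + |F_off|`. -/
theorem vertex_cover_Ron_bound {n : ℕ} (F : Finset (Finset (Fin n)))
    (c : Fin n → ℝ) (w : Finset (Fin n) → ℝ)
    (hsize : ∀ σ ∈ F, σ.card = 2)
    (hc : ∀ i, 0 < c i) (hw : ∀ σ ∈ F, 0 < w σ)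
    (sad s' : Fin n → Bool)
    (hbr : ∀ r, sad r = false → s' r = true →
      c r ≤ ∑ σ ∈ F.filter (fun σ => r ∈ σ ∧ ∀ j ∈ σ, j ≠ r → s' j = false), w σ) :
    (∀ r ∈ Finset.univ.filter (fun r => sad r = false ∧ s' r = true),
        ∃ σ ∈ F, r ∈ σ ∧ ∀ j ∈ σ, j ≠ r → s' j = false) ∧
      (Finset.univ.filter (fun r => sad r = false ∧ s' r = true)).card
        ≤ (F.filter (fun σ => ∀ i ∈ σ, sad i = false)).card
          + (F.filter (fun σ => ∃ i ∈ σ, sad i = true ∧ s' i = false)).card :=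
  vertex_cover_Ron_bound_general F c w hc sad s' hbr
end

section
/- In the covering game, suppose in state s' all agents in L = ON(s^{ad}) are on, and every on agent r ∈ R_on ⊆ R is best responding. Then c(R_on) ≤ w(F_R), where F_R is the collection of sets uncovered under s^{ad}. -/
open Finset

/-- if in `s'` all of `L = ON(s^{ad})` is on and every on agent of `R` is
best responding, then `c(R_on) ≤ w(F_R)`, where `F_R` is the sets uncovered by `s^{ad}`. -/
theorem cRon_le_wFR {n : ℕ} (F : Finset (Finset (Fin n)))
    (c : Fin n → ℝ) (w : Finset (Fin n) → ℝ)
    (hc : ∀ i, 0 ≤ c i) (hw : ∀ σ ∈ F, 0 ≤ w σ)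
    (sad s' : Fin n → Bool)
    (hL : ∀ i, sad i = true → s' i = true)
    (hbr : ∀ r, sad r = false → s' r = true →
      c r ≤ ∑ σ ∈ F.filter (fun σ => r ∈ σ ∧ ∀ j ∈ σ, j ≠ r → s' j = false), w σ) :
    (∑ r ∈ Finset.univ.filter (fun r => sad r = false ∧ s' r = true), c r)
      ≤ ∑ σ ∈ F.filter (fun σ => ∀ i ∈ σ, sad i = false), w σ := by
  set Ron := Finset.univ.filter (fun r : Fin n => sad r = false ∧ s' r = true) with hRon
  set Fr := fun r : Fin n => F.filter (fun σ => r ∈ σ ∧ ∀ j ∈ σ, j ≠ r → s' j = false) with hFr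
  have hdisj : ∀ r ∈ Ron, ∀ r' ∈ Ron, r ≠ r' → Disjoint (Fr r) (Fr r') := by
    intro r hr r' hr' hne
    simp only [hRon, mem_filter] at hr hr'
    rw [Finset.disjoint_left]
    intro σ hσ hσ'
    simp only [hFr, mem_filter] at hσ hσ'
    have := hσ.2.2 r' hσ'.2.1 (fun h => hne h.symm)
    rw [hr'.2.2] at this
    exact Bool.noConfusion this
  calc ∑ r ∈ Ron, c r ≤ ∑ r ∈ Ron, ∑ σ ∈ Fr r, w σ := by
        apply Finset.sum_le_sum
        intro r hr
        simp only [hRon, mem_filter] at hr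
        exact hbr r hr.2.1 hr.2.2
    _ = ∑ σ ∈ Ron.biUnion Fr, w σ := (Finset.sum_biUnion hdisj).symm
    _ ≤ ∑ σ ∈ F.filter (fun σ => ∀ i ∈ σ, sad i = false), w σ := by
        apply Finset.sum_le_sum_of_subset_of_nonneg
        · intro σ hσ
          simp only [Finset.mem_biUnion, hFr, hRon, mem_filter] at hσ
          obtain ⟨r, ⟨_, hrf, _⟩, hσF, hrσ, hall⟩ := hσ
          refine mem_filter.mpr ⟨hσF, fun i hi => ?_⟩
          by_cases hir : i = r
          · exact hir ▸ hrf
          · have := hall i hi hir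
            cases h : sad i
            · rfl
            · rw [hL i h] at this; exact Bool.noConfusion this
        · intro σ hσ _
          exact hw σ (mem_filter.mp hσ).1
end
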